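/- Suppose P = Pᵀ ≻ 0 solves P(L+Θ) + (L+Θ)ᵀP = Q for some Q = Qᵀ ≻ 0, where L + Θ is such that -(L+Θ) is Hurwitz. Let Φ, Σ, Δ be diagonal positive matrices and γ ∈ ℝⁿ, set x*(x₀) = (L+Θ)^{-1}Θx₀ and z = x - x*. Then along solutions of the masked Friedkin–Johnsen system ẋ = -(L+Θ)(I+Φe^{-Σt})(x + e^{-Δt}γ) + Θ(I+Φe^{-Σt})(x₀ + e^{-Δt}γ), the function V(z) = zᵀPz satisfies V̇ ≤ -α‖z‖² + β‖z‖e^{-δt} for some constants α, β, δ > 0; consequently z(t) → 0, i.e., x(t) → x*(x₀), uniformly in the initial time. -/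

import Mathlib

/-!
Write `A = L + Θ` and `z = x - x*`. Since `A x* = Θ x₀`, the masked system reads `ż = -A z + u(t)`
with the commutator term `u = Θ (φ x₀) - A (φ x) + (Θ - A) ((1 + φ) e)`, where `φ = Φ e^{-Σt}` and
`e = e^{-Δt} γ`; hence `‖u(t)‖ ≤ e^{-σt} (d ‖z‖ + d')` with `σ = min (Σ, Δ)`. The Lyapunov equation
gives `V̇ = -zᵀQz + 2 zᵀPu ≤ -λ ‖z‖² + e^{-σt} (d₁ ‖z‖² + d₂ ‖z‖)`. As `e^{-σt}` is integrable, an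
integrating factor bounds `V` along the whole trajectory; with `‖z‖` bounded the perturbation
becomes `β ‖z‖ e^{-δt}`, and then `V̇ ≤ -(λ / c) V + c' e^{-δt}` forces `V → 0`.
The Lyapunov equation also makes `A` invertible: `A v = 0` gives `vᵀQv = 0`.
-/

open Real Filter Matrix Set Topology

theorem antitoneOn_Ici_zero_of_hasDerivAt {F F' : ℝ → ℝ} (hF : ∀ t, HasDerivAt F (F' t) t)
    (hF' : ∀ t, 0 < t → F' t ≤ 0) : AntitoneOn F (Ici 0) :=
  antitoneOn_of_hasDerivWithinAt_nonpos (convex_Ici 0)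
    (fun t _ => (hF t).continuousAt.continuousWithinAt) (fun t _ => (hF t).hasDerivWithinAt)
    (by rw [interior_Ici]; exact hF')

theorem le_exp_mul_of_hasDerivAt_le {V V' : ℝ → ℝ} {a b σ : ℝ} (ha : 0 < a) (hb : 0 ≤ b)
    (hσ : 0 < σ) (hV : ∀ t, HasDerivAt V (V' t) t) (hV_nonneg : ∀ t, 0 ≤ V t)
    (hV' : ∀ t, 0 ≤ t → V' t ≤ exp (-σ * t) * (a * V t + b)) {t : ℝ} (ht : 0 ≤ t) :
    V t ≤ exp (a / σ) * (V 0 + b / a) := by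
  -- integrating factor, with `1 ≤ μ ≤ μ 0 = exp (a / σ)` on `[0, ∞)`
  let μ : ℝ → ℝ := fun s => exp (a / σ * exp (-σ * s))
  have hμ : ∀ s, HasDerivAt μ (-a * exp (-σ * s) * μ s) s := fun s =>
    ((((hasDerivAt_id' s).const_mul (-σ)).exp).const_mul (a / σ)).exp.congr_deriv
      (by simp only [μ]; field_simp)
  have hanti : AntitoneOn (fun s => μ s * (V s + b / a)) (Ici 0) := by
    refine antitoneOn_Ici_zero_of_hasDerivAt (fun s => (hμ s).mul ((hV s).add_const _))
      fun s hs => ?_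
    have hdecomp : -a * exp (-σ * s) * μ s * (V s + b / a) + μ s * V' s =
        μ s * (V' s - exp (-σ * s) * (a * V s + b)) := by
      field_simp
      ring
    rw [hdecomp]
    exact mul_nonpos_of_nonneg_of_nonpos (exp_pos _).le (by linarith [hV' s hs.le])
  have hba : 0 ≤ b / a := div_nonneg hb ha.le
  calc V t ≤ V t + b / a := by linarith
    _ ≤ μ t * (V t + b / a) :=
        le_mul_of_one_le_left (by linarith [hV_nonneg t]) (one_le_exp (by positivity))
    _ ≤ μ 0 * (V 0 + b / a) := hanti (mem_Ici.2 le_rfl) ht ht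
    _ = exp (a / σ) * (V 0 + b / a) := by simp [μ]

theorem tendsto_zero_of_hasDerivAt_le_neg_mul_add_exp {V V' : ℝ → ℝ} {a c δ : ℝ} (hδ : 0 < δ)
    (hδa : δ < a) (hV : ∀ t, HasDerivAt V (V' t) t) (hV_nonneg : ∀ t, 0 ≤ V t)
    (hV' : ∀ t, 0 ≤ t → V' t ≤ -a * V t + c * exp (-δ * t)) : Tendsto V atTop (𝓝 0) := by
  -- `k` makes `exp (a s) V s - k exp ((a - δ) s)` nonincreasing
  set k := c / (a - δ)
  have hk : k * (a - δ) = c := div_mul_cancel₀ _ (sub_pos.2 hδa).ne'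
  have hexp : ∀ s, exp (a * s) * exp (-δ * s) = exp ((a - δ) * s) := fun s => by
    rw [← exp_add]; ring_nf
  have hanti : AntitoneOn (fun s => exp (a * s) * V s - k * exp ((a - δ) * s)) (Ici 0) := by
    refine antitoneOn_Ici_zero_of_hasDerivAt (fun s => ((((hasDerivAt_id' s).const_mul a).exp).mul
      (hV s)).sub (((hasDerivAt_id' s).const_mul (a - δ)).exp.const_mul k)) fun s hs => ?_
    have h := mul_le_mul_of_nonneg_left (hV' s hs.le) (exp_pos (a * s)).le
    have e : exp (a * s) * (-a * V s + c * exp (-δ * s)) =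
        -(exp (a * s) * (a * 1) * V s) + k * (exp ((a - δ) * s) * ((a - δ) * 1)) := by
      rw [← hexp, ← hk]; ring
    linarith
  have hbound : ∀ t, 0 ≤ t → V t ≤ (V 0 - k) * exp (-a * t) + k * exp (-δ * t) := by
    intro t ht
    have h := mul_le_mul_of_nonneg_left (hanti (mem_Ici.2 le_rfl) ht ht) (exp_pos (-a * t)).le
    have e : exp (-a * t) * (exp (a * t) * V t - k * exp ((a - δ) * t)) =
        V t - k * exp (-δ * t) := by
      rw [mul_sub, ← mul_assoc, ← exp_add, ← mul_assoc, mul_comm _ k, mul_assoc, ← exp_add]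
      ring_nf; simp
    simp only [mul_zero, exp_zero, one_mul] at h
    linarith
  have hdecay : ∀ r : ℝ, 0 < r → Tendsto (fun t => exp (-r * t)) atTop (𝓝 0) := fun r hr =>
    tendsto_exp_atBot.comp (tendsto_id.const_mul_atTop_of_neg (neg_lt_zero.2 hr))
  have hlim := ((hdecay a (hδ.trans hδa)).const_mul (V 0 - k)).add ((hdecay δ hδ).const_mul k)
  rw [mul_zero, mul_zero, add_zero] at hlim
  exact tendsto_of_tendsto_of_tendsto_of_le_of_le' tendsto_const_nhds hlim
    (Eventually.of_forall hV_nonneg) ((eventually_ge_atTop 0).mono hbound)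

theorem le_exp_mul_of_hasDerivAt_le_perturbed {c₁ α σ d₁ d₂ : ℝ} (hc₁ : 0 < c₁) (hα : 0 ≤ α)
    (hσ : 0 < σ) (hd₁ : 0 ≤ d₁) (hd₂ : 0 ≤ d₂) {V V' S : ℝ → ℝ}
    (hV : ∀ t, HasDerivAt V (V' t) t) (hS : ∀ t, 0 ≤ S t) (hlow : ∀ t, c₁ * S t ≤ V t)
    (hV' : ∀ t, 0 ≤ t → V' t ≤ -α * S t + exp (-σ * t) * (d₁ * S t + d₂ * √(S t)))
    {t : ℝ} (ht : 0 ≤ t) :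
    V t ≤ exp (((d₁ + d₂) / c₁ + 1) / σ) * (V 0 + d₂ / ((d₁ + d₂) / c₁ + 1)) := by
  set a := (d₁ + d₂) / c₁ + 1
  have hV_nonneg : ∀ t, 0 ≤ V t := fun t => (mul_nonneg hc₁.le (hS t)).trans (hlow t)
  refine le_exp_mul_of_hasDerivAt_le (by positivity) hd₂ hσ hV hV_nonneg (fun s hs => ?_) ht
  -- `√S ≤ 1 + S` and `S ≤ V / c₁` turn the perturbation into one linear in `V`
  have hsqrt : √(S s) ≤ 1 + S s := by nlinarith [sq_sqrt (hS s), sq_nonneg (√(S s) - 1)]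
  have hSV : (d₁ + d₂) * S s ≤ (d₁ + d₂) / c₁ * V s := by
    rw [div_mul_eq_mul_div, le_div_iff₀ hc₁]
    nlinarith [hlow s]
  have h := mul_le_mul_of_nonneg_left (show d₁ * S s + d₂ * √(S s) ≤ a * V s + d₂ by
    nlinarith [hV_nonneg s, mul_le_mul_of_nonneg_left hsqrt hd₂]) (exp_pos (-σ * s)).le
  nlinarith [hV' s hs, mul_nonneg hα (hS s)]

theorem exists_decay_of_hasDerivAt_le_perturbed {c₁ c₂ α σ d₁ d₂ V₀ : ℝ} (hc₁ : 0 < c₁)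
    (hc₂ : 0 < c₂) (hα : 0 < α) (hσ : 0 < σ) (hd₁ : 0 ≤ d₁) (hd₂ : 0 ≤ d₂) :
    ∃ β δ : ℝ, 0 < β ∧ 0 < δ ∧ ∀ V V' S : ℝ → ℝ, (∀ t, HasDerivAt V (V' t) t) → V 0 = V₀ →
      (∀ t, 0 ≤ S t) → (∀ t, c₁ * S t ≤ V t) → (∀ t, V t ≤ c₂ * S t) →
      (∀ t, 0 ≤ t → V' t ≤ -α * S t + exp (-σ * t) * (d₁ * S t + d₂ * √(S t))) →
      (∀ t, 0 ≤ t → V' t ≤ -α * S t + β * √(S t) * exp (-δ * t)) ∧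
        Tendsto S atTop (𝓝 0) := by
  set a := (d₁ + d₂) / c₁ + 1
  set K := √(exp (a / σ) * (V₀ + d₂ / a) / c₁)
  set δ := min σ (α / (2 * c₂))
  have hδ : 0 < δ := by positivity
  have hδα : δ < α / c₂ :=
    (min_le_right _ _).trans_lt (div_lt_div_of_pos_left hα hc₂ (by linarith))
  refine ⟨d₁ * K + d₂ + 1, δ, by positivity, hδ, fun V V' S hV hV₀ hS hlow hup hV' => ?_⟩
  have hbdd : ∀ t, 0 ≤ t → √(S t) ≤ K := fun t ht => by
    have hVt := le_exp_mul_of_hasDerivAt_le_perturbed hc₁ hα.le hσ hd₁ hd₂ hV hS hlow hV' ht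
    rw [hV₀] at hVt
    exact sqrt_le_sqrt ((le_div_iff₀ hc₁).2 (by linarith [hlow t]))
  have hrate : ∀ t, 0 ≤ t → V' t ≤ -α * S t + (d₁ * K + d₂ + 1) * √(S t) * exp (-δ * t) := by
    intro t ht
    have hexp : exp (-σ * t) ≤ exp (-δ * t) :=
      exp_le_exp.2 (by nlinarith [mul_le_mul_of_nonneg_right (min_le_left σ (α / (2 * c₂))) ht])
    have hsplit : d₁ * S t + d₂ * √(S t) = √(S t) * (d₁ * √(S t) + d₂) := by
      linear_combination d₁ * (mul_self_sqrt (hS t)).symm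
    have h : exp (-σ * t) * (√(S t) * (d₁ * √(S t) + d₂)) ≤
        exp (-δ * t) * (√(S t) * (d₁ * K + d₂ + 1)) :=
      mul_le_mul hexp (mul_le_mul_of_nonneg_left
        (by linarith [mul_le_mul_of_nonneg_left (hbdd t ht) hd₁]) (sqrt_nonneg _))
        (by positivity) (exp_pos _).le
    have h' := hV' t ht
    rw [hsplit] at h'
    linarith
  refine ⟨hrate, ?_⟩
  have hV_lim : Tendsto V atTop (𝓝 0) := by
    refine tendsto_zero_of_hasDerivAt_le_neg_mul_add_exp (c := (d₁ * K + d₂ + 1) * K) hδ hδα hV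
      (fun t => (mul_nonneg hc₁.le (hS t)).trans (hlow t)) fun t ht => ?_
    have h1 : α / c₂ * V t ≤ α * S t := by
      rw [div_mul_eq_mul_div, div_le_iff₀ hc₂]; nlinarith [hup t]
    have h2 := mul_le_mul_of_nonneg_right (mul_le_mul_of_nonneg_left (hbdd t ht)
      (show 0 ≤ d₁ * K + d₂ + 1 by positivity)) (exp_pos (-δ * t)).le
    linarith [hrate t ht]
  have hS_le : ∀ t, S t ≤ V t / c₁ := fun t => (le_div_iff₀ hc₁).2 (by linarith [hlow t])
  exact tendsto_of_tendsto_of_tendsto_of_le_of_le tendsto_const_nhds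
    (by simpa using hV_lim.div_const c₁) hS hS_le

theorem exists_pos_forall_le {ι : Type*} [Finite ι] {f : ι → ℝ} (hf : ∀ i, 0 < f i) :
    ∃ c, 0 < c ∧ ∀ i, c ≤ f i := by
  rcases isEmpty_or_nonempty ι with hι | hι
  · exact ⟨1, one_pos, isEmptyElim⟩
  · obtain ⟨i, hi⟩ := Finite.exists_min f
    exact ⟨f i, hf i, hi⟩

section Quadratic

variable {ι : Type*} [Fintype ι]

theorem norm_le_sqrt_sum_sq (v : ι → ℝ) : ‖v‖ ≤ √(∑ i, v i ^ 2) :=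
  (pi_norm_le_iff_of_nonneg (sqrt_nonneg _)).2 fun i => by
    rw [Real.norm_eq_abs, ← sqrt_sq_eq_abs]
    exact sqrt_le_sqrt (Finset.single_le_sum (fun j _ => sq_nonneg (v j)) (Finset.mem_univ i))

theorem tendsto_of_sum_sq_sub_tendsto_zero {α : Type*} {l : Filter α} {x : α → ι → ℝ}
    {xs : ι → ℝ} (h : Tendsto (fun t => ∑ i, (x t i - xs i) ^ 2) l (𝓝 0)) :
    Tendsto x l (𝓝 xs) := by
  rw [tendsto_iff_norm_sub_tendsto_zero]
  refine squeeze_zero (fun t => norm_nonneg _) (fun t => norm_le_sqrt_sum_sq (x t - xs)) ?_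
  simpa using h.sqrt

theorem abs_dotProduct_le (v w : ι → ℝ) : |v ⬝ᵥ w| ≤ Fintype.card ι * (‖v‖ * ‖w‖) :=
  calc |v ⬝ᵥ w| ≤ ∑ i, |v i * w i| := Finset.abs_sum_le_sum_abs _ _
    _ ≤ ∑ _i : ι, ‖v‖ * ‖w‖ := Finset.sum_le_sum fun i _ => by
        rw [abs_mul]
        exact mul_le_mul (norm_le_pi_norm v i) (norm_le_pi_norm w i) (abs_nonneg _) (norm_nonneg _)
    _ = Fintype.card ι * (‖v‖ * ‖w‖) := by simp

theorem Matrix.PosDef.exists_pos_mul_sum_sq_le {M : Matrix ι ι ℝ} (hM : M.PosDef) :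
    ∃ c, 0 < c ∧ ∀ v, c * ∑ i, v i ^ 2 ≤ v ⬝ᵥ M *ᵥ v := by
  rcases isEmpty_or_nonempty ι with hι | ⟨⟨i⟩⟩
  · exact ⟨1, one_pos, fun v => by simp⟩
  -- `c` is the minimum of the form on the unit sphere `∑ i, v i ^ 2 = 1`
  set s := {v : ι → ℝ | ∑ i, v i ^ 2 = 1}
  have hs : IsCompact s := by
    refine Metric.isCompact_of_isClosed_isBounded (isClosed_eq (by fun_prop) continuous_const)
      ((Metric.isBounded_closedBall (x := 0) (r := 1)).subset fun v hv => ?_)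
    rw [mem_closedBall_zero_iff]
    simpa [show ∑ i, v i ^ 2 = 1 from hv] using norm_le_sqrt_sum_sq v
  classical
  have hne : s.Nonempty := ⟨Pi.single i 1, by simp [s, sq, Pi.single_apply]⟩
  obtain ⟨v₀, hv₀, hmin⟩ := hs.exists_isMinOn hne
    (by fun_prop : Continuous fun v : ι → ℝ => v ⬝ᵥ M *ᵥ v).continuousOn
  refine ⟨v₀ ⬝ᵥ M *ᵥ v₀, ?_, fun v => ?_⟩
  · have hv₀_ne : v₀ ≠ 0 := by rintro rfl; simp [s] at hv₀
    simpa using hM.dotProduct_mulVec_pos hv₀_ne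
  by_cases hv : v = 0
  · simp [hv]
  set r := √(∑ i, v i ^ 2)
  have hr : 0 < r := sqrt_pos.2 <| Finset.sum_pos' (fun i _ => sq_nonneg _) <| by
    obtain ⟨j, hj⟩ := Function.ne_iff.1 hv
    exact ⟨j, Finset.mem_univ j, pow_two_pos_of_ne_zero hj⟩
  have hr2 : r ^ 2 = ∑ i, v i ^ 2 := sq_sqrt (Finset.sum_nonneg fun i _ => sq_nonneg _)
  have hu : r⁻¹ • v ∈ s := by
    simp only [s, mem_ofPred_eq, Pi.smul_apply, smul_eq_mul, mul_pow, ← Finset.mul_sum, ← hr2]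
    field_simp
  have hmin' := hmin hu
  simp only [mem_ofPred_eq, mulVec_smul, dotProduct_smul, smul_dotProduct, smul_eq_mul] at hmin'
  rw [← hr2]
  calc v₀ ⬝ᵥ M *ᵥ v₀ * r ^ 2 ≤ r⁻¹ * (r⁻¹ * v ⬝ᵥ M *ᵥ v) * r ^ 2 := by gcongr
    _ = v ⬝ᵥ M *ᵥ v := by field_simp

theorem Matrix.isUnit_det_of_posDef_mul_add_transpose_mul [DecidableEq ι] {A P Q : Matrix ι ι ℝ}
    (hQ : Q.PosDef) (hPA : P * A + Aᵀ * P = Q) : IsUnit A.det := by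
  rw [isUnit_iff_ne_zero, ne_eq, ← exists_mulVec_eq_zero_iff]
  rintro ⟨v, hv, hAv⟩
  have hQv : v ⬝ᵥ Q *ᵥ v = 0 := by
    rw [← hPA, add_mulVec, dotProduct_add, ← mulVec_mulVec, hAv, mulVec_zero, dotProduct_zero,
      ← mulVec_mulVec, dotProduct_mulVec, vecMul_transpose, hAv, zero_dotProduct, add_zero]
  exact (hQ.dotProduct_mulVec_pos hv).ne' (by simpa using hQv)

theorem HasDerivAt.dotProduct {f g : ℝ → ι → ℝ} {f' g' : ι → ℝ} {t : ℝ} (hf : HasDerivAt f f' t)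
    (hg : HasDerivAt g g' t) : HasDerivAt (fun s => f s ⬝ᵥ g s) (f' ⬝ᵥ g t + f t ⬝ᵥ g') t := by
  simp only [_root_.dotProduct, ← Finset.sum_add_distrib]
  exact HasDerivAt.fun_sum fun i _ => (hasDerivAt_pi.1 hf i).mul (hasDerivAt_pi.1 hg i)

theorem HasDerivAt.matrix_mulVec (M : Matrix ι ι ℝ) {f : ℝ → ι → ℝ} {f' : ι → ℝ} {t : ℝ}
    (hf : HasDerivAt f f' t) : HasDerivAt (fun s => M *ᵥ f s) (M *ᵥ f') t :=
  hasDerivAt_pi.2 fun i => ((hasDerivAt_const t (M i)).dotProduct hf).congr_deriv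
    (by rw [zero_dotProduct, zero_add]; rfl)

theorem hasDerivAt_dotProduct_mulVec_of_lyapunov {A P Q : Matrix ι ι ℝ} (hP : P.IsSymm)
    (hPA : P * A + Aᵀ * P = Q) {z : ℝ → ι → ℝ} {u : ι → ℝ} {t : ℝ}
    (hz : HasDerivAt z (-(A *ᵥ z t) + u) t) :
    HasDerivAt (fun s => z s ⬝ᵥ P *ᵥ z s) (-(z t ⬝ᵥ Q *ᵥ z t) + 2 * (z t ⬝ᵥ P *ᵥ u)) t := by
  refine (hz.dotProduct (hz.matrix_mulVec P)).congr_deriv ?_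
  have hsymm : ∀ v w : ι → ℝ, v ⬝ᵥ P *ᵥ w = w ⬝ᵥ P *ᵥ v := fun v w => by
    rw [dotProduct_mulVec, ← mulVec_transpose, hP.eq, dotProduct_comm]
  have hQ : z t ⬝ᵥ Q *ᵥ z t = 2 * (A *ᵥ z t ⬝ᵥ P *ᵥ z t) := by
    rw [← hPA, add_mulVec, dotProduct_add, ← mulVec_mulVec, ← mulVec_mulVec,
      dotProduct_mulVec (z t) Aᵀ, vecMul_transpose, hsymm (z t)]
    ring
  rw [hsymm (z t), add_dotProduct, neg_dotProduct, hsymm u, hQ]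
  ring

end Quadratic

section Masked

attribute [local instance] Matrix.linftyOpNormedAddCommGroup

variable {ι : Type*} [Fintype ι]

theorem abs_dotProduct_mulVec_le (M : Matrix ι ι ℝ) (v w : ι → ℝ) :
    |v ⬝ᵥ M *ᵥ w| ≤ Fintype.card ι * ‖M‖ * (‖v‖ * ‖w‖) := by
  refine (abs_dotProduct_le v (M *ᵥ w)).trans ?_
  rw [mul_assoc, mul_left_comm ‖M‖]
  gcongr
  exact linfty_opNorm_mulVec M w

theorem exists_dotProduct_mulVec_le_mul_sum_sq (M : Matrix ι ι ℝ) :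
    ∃ C, 0 < C ∧ ∀ v : ι → ℝ, v ⬝ᵥ M *ᵥ v ≤ C * ∑ i, v i ^ 2 := by
  refine ⟨Fintype.card ι * ‖M‖ + 1, by positivity, fun v => ?_⟩
  have hv : ‖v‖ * ‖v‖ ≤ ∑ i, v i ^ 2 := by
    rw [← sq_sqrt (Finset.sum_nonneg fun i _ => sq_nonneg (v i)), sq]
    exact mul_self_le_mul_self (norm_nonneg v) (norm_le_sqrt_sum_sq v)
  have := (le_abs_self _).trans (abs_dotProduct_mulVec_le M v v)
  have := mul_le_mul_of_nonneg_left hv (show 0 ≤ (Fintype.card ι : ℝ) * ‖M‖ by positivity)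
  nlinarith [Finset.sum_nonneg fun i (_ : i ∈ Finset.univ) => sq_nonneg (v i)]

theorem masked_field_eq_neg_mulVec_add {A Θ : Matrix ι ι ℝ} {x₀ xs : ι → ℝ}
    (hxs : A *ᵥ xs = Θ *ᵥ x₀) (φ e x : ι → ℝ) :
    -(A *ᵥ ((1 + φ) * (x + e))) + Θ *ᵥ ((1 + φ) * (x₀ + e)) =
      -(A *ᵥ (x - xs)) + (Θ *ᵥ (φ * x₀) - A *ᵥ (φ * x) + (Θ - A) *ᵥ ((1 + φ) * e)) := by
  simp only [add_mul, mul_add, one_mul, mulVec_add, mulVec_sub, sub_mulVec, hxs]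
  abel

theorem norm_masked_perturbation_le (A Θ : Matrix ι ι ℝ) {φ e : ι → ℝ} {a g E : ℝ}
    (hφ : ‖φ‖ ≤ a * E) (hφ₁ : ‖φ‖ ≤ a) (he : ‖e‖ ≤ g * E) (x x₀ xs : ι → ℝ) :
    ‖Θ *ᵥ (φ * x₀) - A *ᵥ (φ * x) + (Θ - A) *ᵥ ((1 + φ) * e)‖ ≤
      E * (a * ‖A‖ * ‖x - xs‖ + (a * (‖Θ‖ * ‖x₀‖ + ‖A‖ * ‖xs‖) + ‖Θ - A‖ * ((1 + a) * g))) := by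
  have h1 : ‖Θ *ᵥ (φ * x₀)‖ ≤ ‖Θ‖ * (‖φ‖ * ‖x₀‖) :=
    (linfty_opNorm_mulVec _ _).trans (by gcongr; exact norm_mul_le _ _)
  have h2 : ‖A *ᵥ (φ * x)‖ ≤ ‖A‖ * (‖φ‖ * ‖x‖) :=
    (linfty_opNorm_mulVec _ _).trans (by gcongr; exact norm_mul_le _ _)
  have h3 : ‖(1 + φ) * e‖ ≤ (1 + ‖φ‖) * ‖e‖ := by
    rw [add_mul, one_mul, add_mul, one_mul]
    exact (norm_add_le _ _).trans (by gcongr; exact norm_mul_le _ _)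
  have h4 := (linfty_opNorm_mulVec (Θ - A) ((1 + φ) * e)).trans
    (mul_le_mul_of_nonneg_left h3 (norm_nonneg _))
  have hx : ‖x‖ ≤ ‖x - xs‖ + ‖xs‖ := by linarith [norm_sub_norm_le x xs]
  have haE : 0 ≤ a * E := (norm_nonneg _).trans hφ
  have ha : 0 ≤ 1 + a := by linarith [(norm_nonneg _).trans hφ₁]
  calc _ ≤ ‖Θ *ᵥ (φ * x₀)‖ + ‖A *ᵥ (φ * x)‖ + ‖(Θ - A) *ᵥ ((1 + φ) * e)‖ :=
        (norm_add_le _ _).trans (by gcongr; exact norm_sub_le _ _)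
    _ ≤ ‖φ‖ * (‖Θ‖ * ‖x₀‖ + ‖A‖ * ‖x‖) + ‖Θ - A‖ * ((1 + ‖φ‖) * ‖e‖) := by linarith
    _ ≤ a * E * (‖Θ‖ * ‖x₀‖ + ‖A‖ * (‖x - xs‖ + ‖xs‖)) + ‖Θ - A‖ * ((1 + a) * (g * E)) := by
        gcongr
    _ = _ := by ring

theorem norm_mul_exp_neg_mul_le {r : ι → ℝ} {σ t : ℝ} (hr : ∀ i, σ ≤ r i) (ht : 0 ≤ t)
    (c : ι → ℝ) : ‖fun i => c i * exp (-r i * t)‖ ≤ ‖c‖ * exp (-σ * t) :=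
  (pi_norm_le_iff_of_nonneg (by positivity)).2 fun i => by
    rw [norm_mul, Real.norm_of_nonneg (exp_pos _).le]
    exact mul_le_mul (norm_le_pi_norm c i) (exp_le_exp.2 (by nlinarith [hr i]))
      (exp_pos _).le (norm_nonneg _)

theorem exists_deriv_lyapunov_le_of_masked {A Θ P Q : Matrix ι ι ℝ} (hP : P.IsSymm)
    (hPA : P * A + Aᵀ * P = Q) {lQ σ : ℝ} (hQ : ∀ v : ι → ℝ, lQ * ∑ i, v i ^ 2 ≤ v ⬝ᵥ Q *ᵥ v)
    {Φ Sg Δ γ x₀ xs : ι → ℝ} (hσ : 0 ≤ σ) (hSg : ∀ i, σ ≤ Sg i) (hΔ : ∀ i, σ ≤ Δ i)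
    (hxs : A *ᵥ xs = Θ *ᵥ x₀) :
    ∃ d₁ d₂ : ℝ, 0 ≤ d₁ ∧ 0 ≤ d₂ ∧ ∀ x : ℝ → ι → ℝ,
      (∀ t, HasDerivAt x
        (-(A *ᵥ fun i => (1 + Φ i * exp (-Sg i * t)) * (x t i + exp (-Δ i * t) * γ i)) +
          Θ *ᵥ fun i => (1 + Φ i * exp (-Sg i * t)) * (x₀ i + exp (-Δ i * t) * γ i)) t) →
      ∀ t, HasDerivAt (fun s => (x s - xs) ⬝ᵥ P *ᵥ (x s - xs))
          (deriv (fun s => (x s - xs) ⬝ᵥ P *ᵥ (x s - xs)) t) t ∧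
        (0 ≤ t → deriv (fun s => (x s - xs) ⬝ᵥ P *ᵥ (x s - xs)) t ≤
          -lQ * ∑ i, (x t i - xs i) ^ 2 + exp (-σ * t) *
            (d₁ * ∑ i, (x t i - xs i) ^ 2 + d₂ * √(∑ i, (x t i - xs i) ^ 2))) := by
  set c := Fintype.card ι * ‖P‖
  set D₂ := ‖Φ‖ * (‖Θ‖ * ‖x₀‖ + ‖A‖ * ‖xs‖) + ‖Θ - A‖ * ((1 + ‖Φ‖) * ‖γ‖)
  refine ⟨2 * c * (‖Φ‖ * ‖A‖), 2 * c * D₂, by positivity, by positivity, fun x hx t => ?_⟩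
  set φ : ℝ → ι → ℝ := fun s i => Φ i * exp (-Sg i * s)
  set e : ℝ → ι → ℝ := fun s i => exp (-Δ i * s) * γ i
  set u : ℝ → ι → ℝ := fun s =>
    Θ *ᵥ (φ s * x₀) - A *ᵥ (φ s * x s) + (Θ - A) *ᵥ ((1 + φ s) * e s)
  have hz : ∀ s, HasDerivAt (fun s => x s - xs) (-(A *ᵥ (x s - xs)) + u s) s := fun s => by
    rw [← masked_field_eq_neg_mulVec_add hxs]
    exact (hx s).sub_const xs
  have hV := hasDerivAt_dotProduct_mulVec_of_lyapunov hP hPA (hz t)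
  refine ⟨hV.differentiableAt.hasDerivAt, fun ht => ?_⟩
  rw [hV.deriv]
  have hφ : ‖φ t‖ ≤ ‖Φ‖ * exp (-σ * t) := norm_mul_exp_neg_mul_le hSg ht Φ
  have he : ‖e t‖ ≤ ‖γ‖ * exp (-σ * t) := by
    rw [show e t = fun i => γ i * exp (-Δ i * t) from funext fun i => mul_comm _ _]
    exact norm_mul_exp_neg_mul_le hΔ ht γ
  have hE : exp (-σ * t) ≤ 1 := exp_le_one_iff.2 (by nlinarith [mul_nonneg hσ ht])
  have hu := norm_masked_perturbation_le A Θ hφ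
    (hφ.trans (mul_le_of_le_one_right (norm_nonneg _) hE)) he (x t) x₀ xs
  set S := ∑ i, (x t i - xs i) ^ 2
  have hzS : ‖x t - xs‖ ≤ √S := norm_le_sqrt_sum_sq _
  have hzu : ‖x t - xs‖ * ‖u t‖ ≤ √S * (exp (-σ * t) * (‖Φ‖ * ‖A‖ * √S + D₂)) :=
    mul_le_mul hzS (hu.trans (by gcongr)) (norm_nonneg _) (sqrt_nonneg _)
  have hPu := (le_abs_self _).trans (abs_dotProduct_mulVec_le P (x t - xs) (u t))
  have hQz : lQ * S ≤ (x t - xs) ⬝ᵥ Q *ᵥ (x t - xs) := hQ (x t - xs)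
  have hSS : √S * √S = S := mul_self_sqrt (Finset.sum_nonneg fun i _ => sq_nonneg _)
  calc _ ≤ -(lQ * S) + 2 * (c * (√S * (exp (-σ * t) * (‖Φ‖ * ‖A‖ * √S + D₂)))) := by
        gcongr
        exact hPu.trans (mul_le_mul_of_nonneg_left hzu (by positivity))
    _ = _ := by linear_combination 2 * c * exp (-σ * t) * (‖Φ‖ * ‖A‖) * hSS

end Masked

theorem stmt14_general {n : ℕ} (L Θ P Q : Matrix (Fin n) (Fin n) ℝ)
    (hP : P.PosDef) (hQ : Q.PosDef)
    (hLyap : P * (L + Θ) + (L + Θ)ᵀ * P = Q)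
    (Φ Sg Δ γ : Fin n → ℝ)
    (hSg : ∀ i, 0 < Sg i) (hΔ : ∀ i, 0 < Δ i)
    (x₀ : Fin n → ℝ) (xstar : Fin n → ℝ)
    (hxstar : xstar = (L + Θ)⁻¹.mulVec (Θ.mulVec x₀)) :
    ∃ α β δ : ℝ, 0 < α ∧ 0 < β ∧ 0 < δ ∧
      ∀ x : ℝ → Fin n → ℝ,
        (∀ t, HasDerivAt x
          (-(L + Θ).mulVec (fun i =>
              (1 + Φ i * Real.exp (-Sg i * t)) * (x t i + Real.exp (-Δ i * t) * γ i)) +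
            Θ.mulVec (fun i =>
              (1 + Φ i * Real.exp (-Sg i * t)) * (x₀ i + Real.exp (-Δ i * t) * γ i))) t) →
        x 0 = x₀ →
        ((∀ t, 0 ≤ t →
          deriv (fun s => (fun i => x s i - xstar i) ⬝ᵥ P.mulVec fun i => x s i - xstar i) t ≤
            -α * (∑ i, (x t i - xstar i) ^ 2) +
              β * Real.sqrt (∑ i, (x t i - xstar i) ^ 2) * Real.exp (-δ * t)) ∧
          Tendsto x atTop (nhds xstar)) := by
  have hxs : (L + Θ) *ᵥ xstar = Θ *ᵥ x₀ := by
    rw [hxstar, mulVec_mulVec,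
      mul_nonsing_inv _ (isUnit_det_of_posDef_mul_add_transpose_mul hQ hLyap), one_mulVec]
  obtain ⟨lP, hlP, hP_ge⟩ := hP.exists_pos_mul_sum_sq_le
  obtain ⟨lQ, hlQ, hQ_ge⟩ := hQ.exists_pos_mul_sum_sq_le
  obtain ⟨CP, hCP, hP_le⟩ := exists_dotProduct_mulVec_le_mul_sum_sq P
  obtain ⟨σ, hσ, hσ_le⟩ := exists_pos_forall_le fun i => lt_min (hSg i) (hΔ i)
  obtain ⟨d₁, d₂, hd₁, hd₂, hderiv⟩ := exists_deriv_lyapunov_le_of_masked (Φ := Φ) (γ := γ)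
    (isHermitian_iff_isSymm.1 hP.isHermitian) hLyap
    hQ_ge hσ.le (fun i => (hσ_le i).trans (min_le_left _ _))
    (fun i => (hσ_le i).trans (min_le_right _ _)) hxs
  obtain ⟨β, δ, hβ, hδ, hdecay⟩ := exists_decay_of_hasDerivAt_le_perturbed hlP hCP hlQ hσ hd₁ hd₂
    (V₀ := (x₀ - xstar) ⬝ᵥ P *ᵥ (x₀ - xstar))
  refine ⟨lQ, β, δ, hlQ, hβ, hδ, fun x hx hx₀ => ?_⟩
  obtain ⟨hrate, hS⟩ := hdecay _ _ (fun t => ∑ i, (x t i - xstar i) ^ 2)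
    (fun t => (hderiv x hx t).1) (by rw [hx₀]) (fun t => Finset.sum_nonneg fun i _ => sq_nonneg _)
    (fun t => hP_ge (x t - xstar)) (fun t => hP_le (x t - xstar)) fun t ht => (hderiv x hx t).2 ht
  exact ⟨hrate, tendsto_of_sum_sq_sub_tendsto_zero hS⟩

/-- Theorem 2 of the paper: along the masked continuous-time Friedkin–Johnsen system,
the quadratic Lyapunov function `V(z) = zᵀPz` (with `P` solving the Lyapunov equation)
satisfies `V̇ ≤ -α‖z‖² + β‖z‖e^{-δt}`, hence `x(t) → x*(x₀) = (L+Θ)⁻¹Θx₀`. -/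
theorem stmt14 {n : ℕ} (L Θ P Q : Matrix (Fin n) (Fin n) ℝ)
    (hP : P.PosDef) (hPsym : P.IsSymm) (hQ : Q.PosDef) (hQsym : Q.IsSymm)
    (hLyap : P * (L + Θ) + (L + Θ)ᵀ * P = Q)
    (hHurwitz : ∀ μ ∈ spectrum ℂ ((L + Θ).map (algebraMap ℝ ℂ)), 0 < μ.re)
    (Φ Sg Δ γ : Fin n → ℝ)
    (hΦ : ∀ i, 0 < Φ i) (hSg : ∀ i, 0 < Sg i) (hΔ : ∀ i, 0 < Δ i)
    (x₀ : Fin n → ℝ) (xstar : Fin n → ℝ)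
    (hxstar : xstar = (L + Θ)⁻¹.mulVec (Θ.mulVec x₀)) :
    ∃ α β δ : ℝ, 0 < α ∧ 0 < β ∧ 0 < δ ∧
      ∀ x : ℝ → Fin n → ℝ,
        (∀ t, HasDerivAt x
          (-(L + Θ).mulVec (fun i =>
              (1 + Φ i * Real.exp (-Sg i * t)) * (x t i + Real.exp (-Δ i * t) * γ i)) +
            Θ.mulVec (fun i =>
              (1 + Φ i * Real.exp (-Sg i * t)) * (x₀ i + Real.exp (-Δ i * t) * γ i))) t) →
        x 0 = x₀ →
        ((∀ t, 0 ≤ t →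
          deriv (fun s => (fun i => x s i - xstar i) ⬝ᵥ P.mulVec fun i => x s i - xstar i) t ≤
            -α * (∑ i, (x t i - xstar i) ^ 2) +
              β * Real.sqrt (∑ i, (x t i - xstar i) ^ 2) * Real.exp (-δ * t)) ∧
          Tendsto x atTop (nhds xstar)) :=
  stmt14_general L Θ P Q hP hQ hLyap Φ Sg Δ γ hSg hΔ x₀ xstar hxstar
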